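/- Under Assumption 1, for any ν > 0, any weights w_s ∈ [0,1], any θ ∈ Θ and any λ ∈ ℝ^d with θ + λ ∈ Θ, and any γ ∈ (0, μ/(2L)]: D_{Z_t^ν}(θ + γλ, θ) ≤ (γ/2) · D_{Z_t^ν}(θ + λ, θ). That is, γ ↦ D_{Z_t^ν}(θ + γλ, θ) is sub-homogeneous with contraction factor 1/2 on (0, μ/(2L)]. -/

import Mathlib

/-!
Along the ray `θ + c • λ`, the divergence splits as `∑ w_s D_A(u_s + c v_s, u_s) + ν c² ‖λ‖² / 2`
with `u_s = x_s ⬝ θ` and `v_s = x_s ⬝ λ`, all of which lie in `[-B, B]` by Cauchy–Schwarz.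
Taylor's theorem with Lagrange remainder sandwiches each scalar divergence,
`μ v² / 2 ≤ D_A(u + v, u)` and `D_A(u + γ v, u) ≤ L γ² v² / 2`, so `γ L ≤ μ / 2` yields the factor
`γ / 2` termwise; the regularizer contributes `γ² ≤ γ / 2` because `γ ≤ μ / (2L) ≤ 1 / 2`.
-/

open Set

noncomputable def bregmanDiv (f : ℝ → ℝ) (a b : ℝ) : ℝ := f a - f b - deriv f b * (a - b)

theorem exists_bregmanDiv_eq_deriv2_mul_sq {f : ℝ → ℝ} (hf : ContDiff ℝ 2 f) (a b : ℝ) :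
    ∃ ξ ∈ uIcc b a, bregmanDiv f a b = deriv (deriv f) ξ * (a - b) ^ 2 / 2 := by
  rcases eq_or_ne b a with rfl | hba
  · exact ⟨b, left_mem_uIcc, by simp [bregmanDiv]⟩
  obtain ⟨ξ, hξ, htaylor⟩ :=
    taylor_mean_remainder_lagrange_iteratedDeriv (n := 1) hba hf.contDiffOn
  have hderiv : derivWithin f (uIcc b a) b = deriv f b :=
    (hf.differentiable two_ne_zero b).derivWithin (uniqueDiffOn_uIcc hba b left_mem_uIcc)
  refine ⟨ξ, uIoo_subset_uIcc_self hξ, ?_⟩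
  norm_num [iteratedDerivWithin_one, hderiv, iteratedDeriv_succ, Nat.factorial] at htaylor
  rw [bregmanDiv]
  linarith

theorem bregmanDiv_mem_Icc {f : ℝ → ℝ} (hf : ContDiff ℝ 2 f) {s : Set ℝ} [s.OrdConnected]
    {μ L : ℝ} (hμL : ∀ z ∈ s, μ ≤ deriv (deriv f) z ∧ deriv (deriv f) z ≤ L)
    {a b : ℝ} (ha : a ∈ s) (hb : b ∈ s) :
    bregmanDiv f a b ∈ Icc (μ / 2 * (a - b) ^ 2) (L / 2 * (a - b) ^ 2) := by
  obtain ⟨ξ, hξ, heq⟩ := exists_bregmanDiv_eq_deriv2_mul_sq hf a b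
  obtain ⟨hμ, hL⟩ := hμL ξ (OrdConnected.uIcc_subset ‹_› hb ha hξ)
  rw [heq]
  constructor <;> linarith [mul_le_mul_of_nonneg_right hμ (sq_nonneg (a - b)),
    mul_le_mul_of_nonneg_right hL (sq_nonneg (a - b))]

theorem bregmanDiv_add_mul_le {f : ℝ → ℝ} (hf : ContDiff ℝ 2 f) {s : Set ℝ} [s.OrdConnected]
    {μ L : ℝ} (hμL : ∀ z ∈ s, μ ≤ deriv (deriv f) z ∧ deriv (deriv f) z ≤ L)
    {u v γ : ℝ} (hu : u ∈ s) (huv : u + v ∈ s) (hγ : γ ∈ Icc 0 1) (hγL : γ * L ≤ μ / 2) :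
    bregmanDiv f (u + γ * v) u ≤ γ / 2 * bregmanDiv f (u + v) u := by
  have huγv : u + γ * v ∈ s := (OrdConnected.convex ‹_›).add_smul_mem hu huv hγ
  have hupper := (bregmanDiv_mem_Icc hf hμL huγv hu).2
  have hlower := (bregmanDiv_mem_Icc hf hμL huv hu).1
  rw [add_sub_cancel_left] at hupper hlower
  have hγ0 : 0 ≤ γ := hγ.1
  calc bregmanDiv f (u + γ * v) u ≤ L / 2 * (γ * v) ^ 2 := hupper
    _ = γ / 2 * (γ * L * v ^ 2) := by ring
    _ ≤ γ / 2 * (μ / 2 * v ^ 2) := by gcongr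
    _ ≤ γ / 2 * bregmanDiv f (u + v) u := by gcongr

theorem abs_dotProduct_le {ι : Type*} [Fintype ι] {u p : ι → ℝ} {B : ℝ} (hB : 0 ≤ B)
    (hu : u ⬝ᵥ u ≤ 1) (hp : p ⬝ᵥ p ≤ B ^ 2) : |u ⬝ᵥ p| ≤ B := by
  have hcs : (u ⬝ᵥ p) ^ 2 ≤ (u ⬝ᵥ u) * (p ⬝ᵥ p) := by
    simpa only [dotProduct, sq] using Finset.sum_mul_sq_le_sq_mul_sq Finset.univ u p
  have hp0 : 0 ≤ p ⬝ᵥ p := by simpa using dotProduct_star_self_nonneg p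
  refine abs_le_of_sq_le_sq ?_ hB
  nlinarith

theorem glm_bregman_eq_sum_bregmanDiv {ι σ : Type*} [Fintype ι] {S : Finset σ}
    {A : ℝ → ℝ} {ν : ℝ} {x : σ → ι → ℝ} {w : σ → ℝ} {Z : (ι → ℝ) → ℝ}
    (hZ : ∀ θ, Z θ = (∑ s ∈ S, w s * A (x s ⬝ᵥ θ)) + ν / 2 * (θ ⬝ᵥ θ))
    {D : (ι → ℝ) → (ι → ℝ) → ℝ}
    (hD : ∀ a b, D a b = Z a - Z b -
      ((∑ s ∈ S, w s * deriv A (x s ⬝ᵥ b) * (x s ⬝ᵥ (a - b))) + ν * (b ⬝ᵥ (a - b))))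
    (a b : ι → ℝ) :
    D a b =
      (∑ s ∈ S, w s * bregmanDiv A (x s ⬝ᵥ a) (x s ⬝ᵥ b)) + ν / 2 * ((a - b) ⬝ᵥ (a - b)) := by
  simp only [hD, hZ, bregmanDiv, dotProduct_sub, sub_dotProduct, mul_sub, Finset.sum_sub_distrib,
    dotProduct_comm b a, mul_assoc]
  ring

/-- Lemma 3, sub-homogeneity of the Bregman divergence of `Z_t^ν`.
Under Assumption 1, for any `ν > 0`, weights `w_s ∈ [0,1]`, any `θ ∈ Θ` and `λ ∈ ℝ^d` with
`θ + λ ∈ Θ`, and any `γ ∈ (0, μ/(2L)]`: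
`D_{Z_t^ν}(θ + γλ, θ) ≤ (γ/2) D_{Z_t^ν}(θ + λ, θ)`. -/
theorem bregman_subhomogeneity
    {d : ℕ} (t : ℕ) (A : ℝ → ℝ) (hA : ContDiff ℝ 2 A)
    (B μ L ν : ℝ) (hB : 0 < B) (hμ : 0 < μ) (hν : 0 < ν)
    -- Assumption 1: curvature bounds of A on [−B, B]
    (hμL : ∀ z ∈ Set.Icc (-B) B, μ ≤ deriv (deriv A) z ∧ deriv (deriv A) z ≤ L)
    -- Assumption 1: bounded covariates and parameter set in the ℓ2-ball of radius B
    (x : ℕ → Fin d → ℝ) (hx : ∀ s, x s ⬝ᵥ x s ≤ 1)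
    (w : ℕ → ℝ) (hw : ∀ s, w s ∈ Set.Icc (0 : ℝ) 1)
    (Θ : Set (Fin d → ℝ)) (hΘ : ∀ θ ∈ Θ, θ ⬝ᵥ θ ≤ B ^ 2)
    -- the ν-regularized sum of log-partition functions and its Bregman divergence
    (Z : (Fin d → ℝ) → ℝ)
    (hZ : ∀ θ, Z θ = (∑ s ∈ Finset.Icc 1 t, w s * A (x s ⬝ᵥ θ)) + ν / 2 * (θ ⬝ᵥ θ))
    (D : (Fin d → ℝ) → (Fin d → ℝ) → ℝ)
    (hD : ∀ a b, D a b = Z a - Z b -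
      ((∑ s ∈ Finset.Icc 1 t, w s * deriv A (x s ⬝ᵥ b) * (x s ⬝ᵥ (a - b)))
        + ν * (b ⬝ᵥ (a - b))))
    (θ lamv : Fin d → ℝ) (hθ : θ ∈ Θ) (hθlam : θ + lamv ∈ Θ)
    (γ : ℝ) (hγ : γ ∈ Set.Ioc 0 (μ / (2 * L))) :
    D (θ + γ • lamv) θ ≤ γ / 2 * D (θ + lamv) θ := by
  obtain ⟨hγ0, hγle⟩ := hγ
  have hμ_le_L : μ ≤ L := by
    obtain ⟨h1, h2⟩ := hμL 0 ⟨by linarith, hB.le⟩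
    exact h1.trans h2
  have hγL : γ * L ≤ μ / 2 := by
    rw [le_div_iff₀ (by linarith)] at hγle
    linarith
  have hγ_half : γ ≤ 1 / 2 := by nlinarith
  have hmem : ∀ p ∈ Θ, ∀ s, x s ⬝ᵥ p ∈ Icc (-B) B := fun p hp s =>
    abs_le.mp (abs_dotProduct_le hB.le (hx s) (hΘ p hp))
  rw [glm_bregman_eq_sum_bregmanDiv hZ hD, glm_bregman_eq_sum_bregmanDiv hZ hD, mul_add,
    Finset.mul_sum]
  simp only [add_sub_cancel_left, dotProduct_add, dotProduct_smul, smul_eq_mul, smul_dotProduct]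
  refine add_le_add (Finset.sum_le_sum fun s _ => ?_) ?_
  · have hθs := hmem θ hθ s
    have hθlams := hmem _ hθlam s
    rw [dotProduct_add] at hθlams
    rw [mul_left_comm]
    exact mul_le_mul_of_nonneg_left
      (bregmanDiv_add_mul_le hA hμL hθs hθlams ⟨hγ0.le, by linarith⟩ hγL) (hw s).1
  · have hlamv : 0 ≤ lamv ⬝ᵥ lamv := by simpa using dotProduct_star_self_nonneg lamv
    have hγ_sq : γ * γ ≤ γ / 2 := by nlinarith
    nlinarith [mul_le_mul_of_nonneg_right hγ_sq (mul_nonneg hν.le hlamv)]
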